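/- arXiv:2605.31122 — 5 statements merged into one kernel-verified Lean document; each statement's English description precedes it below -/
import Mathlib

section
/- Let m, n, h, k be positive integers with m ≠ h (and m dividing h implicitly via the constraints). Suppose there exists a positive integer p such that (m·lcm(n,p))/n = h and lcm(n,p)/p = k. Then h/m and n/k are positive integers, gcd(k, h/m) = 1, and p = n·h/(m·k). -/
/-!
Writing `g = gcd n p`, the hypotheses say `k = lcm n p / p = n / g` and `h = m · (lcm n p / n) = m · (p / g)`.
So `h / m = p / g`, which is coprime to `n / g = k`, and `n h / (m k) = n (p / g) / (n / g) = p`.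
-/

theorem Nat.lcm_div_right_eq_div_gcd (n : ℕ) {p : ℕ} (hp : 0 < p) :
    Nat.lcm n p / p = n / Nat.gcd n p := by
  rw [Nat.lcm, Nat.div_div_eq_div_mul, Nat.mul_comm (Nat.gcd n p), ← Nat.div_div_eq_div_mul,
    Nat.mul_div_cancel n hp]

theorem Nat.lcm_div_left_eq_div_gcd {n : ℕ} (p : ℕ) (hn : 0 < n) :
    Nat.lcm n p / n = p / Nat.gcd n p := by
  rw [Nat.lcm_comm, Nat.gcd_comm, Nat.lcm_div_right_eq_div_gcd p hn]

theorem Nat.mul_div_gcd_eq_div_gcd_mul (n p : ℕ) : n * (p / Nat.gcd n p) = n / Nat.gcd n p * p := by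
  rw [← Nat.mul_div_assoc n (Nat.gcd_dvd_right n p), Nat.div_mul_right_comm (Nat.gcd_dvd_left n p)]

theorem stmt1_general (m n h k : ℕ) (hm : 0 < m) (hn : 0 < n)
    (p : ℕ) (hp : 0 < p)
    (h1 : m * Nat.lcm n p / n = h) (h2 : Nat.lcm n p / p = k) :
    m ∣ h ∧ k ∣ n ∧ Nat.gcd k (h / m) = 1 ∧ p = n * h / (m * k) := by
  have hk : k = n / Nat.gcd n p := h2 ▸ Nat.lcm_div_right_eq_div_gcd n hp
  have hh : h = m * (p / Nat.gcd n p) := by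
    rw [← h1, Nat.mul_div_assoc m (Nat.dvd_lcm_left n p), Nat.lcm_div_left_eq_div_gcd p hn]
  have hk_pos : 0 < k := hk ▸ Nat.div_pos (Nat.gcd_le_left p hn) (Nat.gcd_pos_of_pos_left p hn)
  refine ⟨hh ▸ Nat.dvd_mul_right m _, hk ▸ Nat.div_dvd_of_dvd (Nat.gcd_dvd_left n p), ?_, ?_⟩
  · rw [hk, hh, Nat.mul_div_cancel_left _ hm]
    exact Nat.coprime_div_gcd_div_gcd (Nat.gcd_pos_of_pos_left p hn)
  · rw [hh, Nat.mul_left_comm, Nat.mul_div_gcd_eq_div_gcd_mul, ← hk, ← Nat.mul_assoc,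
      Nat.mul_div_cancel_left p (Nat.mul_pos hm hk_pos)]

/-- Dimension compatibility for the STP tensor–vector equation `A ⋉ X = B`
with `A : m×n×r`, `B : h×k×r`, `X ∈ ℂ^p`, in the general case `m ≠ h`:
if a positive integer `p` satisfies `(m·lcm(n,p))/n = h` and `lcm(n,p)/p = k`,
then `h/m` and `n/k` are positive integers (`m ∣ h`, `k ∣ n`),
`gcd(k, h/m) = 1` and `p = n·h/(m·k)`. -/
theorem stmt1 (m n h k : ℕ) (hm : 0 < m) (hn : 0 < n) (hh : 0 < h) (hk : 0 < k)
    (hmh : m ≠ h) (p : ℕ) (hp : 0 < p)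
    (h1 : m * Nat.lcm n p / n = h) (h2 : Nat.lcm n p / p = k) :
    m ∣ h ∧ k ∣ n ∧ Nat.gcd k (h / m) = 1 ∧ p = n * h / (m * k) :=
  stmt1_general m n h k hm hn p hp h1 h2
end

section
/- Let positive integers m, n, h, k, a, b, l, d, p, q satisfy: (m·lcm(n,p))/n = h, (q·lcm(n,p))/p = k, (p·lcm(q,a))/q = l, (b·lcm(q,a))/a = d, together with m = h and l = p. Then n/l and d/b are positive integers, both a·d/b and n/l divide k, and q = a·d/b = l·k/n. -/
/-!
Since `h = m ≠ 0` and `l = p ≠ 0`, the equations for `h` and `l` force `lcm(n, p) = n` and `lcm(q, a) = q`, i.e.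
`p ∣ n` and `a ∣ q`. Writing `n = p·g` and `q = a·f`, the other two equations become
`k = q·g` and `d = b·f`, from which every claim is read off.
-/

theorem dvd_of_mul_lcm_div_eq_self {m n p : ℕ} (hm : m ≠ 0) (h : m * Nat.lcm n p / n = m) :
    p ∣ n := by
  rw [Nat.mul_div_assoc m (Nat.dvd_lcm_left n p), mul_eq_left₀ hm] at h
  rw [← Nat.lcm_eq_left_iff_dvd, Nat.eq_mul_of_div_eq_right (Nat.dvd_lcm_left n p) h, mul_one]

theorem stmt2_general (m n h k a b l d p q : ℕ)
    (hm : 0 < m) (hn : 0 < n) (ha : 0 < a)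
    (hb : 0 < b) (hl : 0 < l)
    (h1 : m * Nat.lcm n p / n = h) (h2 : q * Nat.lcm n p / p = k)
    (h3 : p * Nat.lcm q a / q = l) (h4 : b * Nat.lcm q a / a = d)
    (hmh : m = h) (hlp : l = p) :
    l ∣ n ∧ b ∣ d ∧ (a * d / b) ∣ k ∧ (n / l) ∣ k ∧
      q = a * d / b ∧ q = l * k / n := by
  subst hmh hlp
  obtain ⟨g, rfl⟩ : l ∣ n := dvd_of_mul_lcm_div_eq_self hm.ne' h1
  obtain ⟨f, rfl⟩ : a ∣ q := dvd_of_mul_lcm_div_eq_self hl.ne' h3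
  rw [Nat.lcm_eq_left (dvd_mul_right l g), mul_comm, mul_assoc, Nat.mul_div_cancel_left _ hl] at h2
  rw [Nat.lcm_eq_left (dvd_mul_right a f), mul_left_comm, Nat.mul_div_cancel_left _ ha] at h4
  subst h2 h4
  have h_ad : a * (b * f) / b = a * f := by rw [mul_left_comm, Nat.mul_div_cancel_left _ hb]
  have h_lk : l * (g * (a * f)) / (l * g) = a * f := by
    rw [← mul_assoc, Nat.mul_div_cancel_left _ hn]
  rw [h_ad, h_lk, Nat.mul_div_cancel_left _ hl]
  exact ⟨dvd_mul_right l g, dvd_mul_right b f, dvd_mul_left _ g, dvd_mul_right g _, rfl, rfl⟩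

/-- Dimension compatibility for the coupled STP tensor–matrix equations
`A ⋉ X = B`, `X ⋉ C = D` (`A : m×n×r`, `B : h×k×r`, `C : a×b×r`, `D : l×d×r`,
`X ∈ ℂ^{p×q}`), simplified case `m = h`, `l = p`:
`n/l` and `d/b` are positive integers, both `a·d/b` and `n/l` divide `k`,
and `q = a·d/b = l·k/n`. -/
theorem stmt2 (m n h k a b l d p q : ℕ)
    (hm : 0 < m) (hn : 0 < n) (hh : 0 < h) (hk : 0 < k) (ha : 0 < a)
    (hb : 0 < b) (hl : 0 < l) (hd : 0 < d) (hp : 0 < p) (hq : 0 < q)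
    (h1 : m * Nat.lcm n p / n = h) (h2 : q * Nat.lcm n p / p = k)
    (h3 : p * Nat.lcm q a / q = l) (h4 : b * Nat.lcm q a / a = d)
    (hmh : m = h) (hlp : l = p) :
    l ∣ n ∧ b ∣ d ∧ (a * d / b) ∣ k ∧ (n / l) ∣ k ∧
      q = a * d / b ∧ q = l * k / n :=
  stmt2_general m n h k a b l d p q hm hn ha hb hl h1 h2 h3 h4 hmh hlp
end

section
/- Let positive integers m, n, h, k, a, b, l, d, p, q satisfy the STP compatibility relations (m·lcm(n,p))/n = h, (q·lcm(n,p))/p = k, (p·lcm(q,a))/q = l, (b·lcm(q,a))/a = d, with m = h and l ≠ p. Set α = n/p and β = l/p. Then d/b is a positive integer, β ≠ 1, p = l/β = n/α, q = (a·d)/(b·β) = k/α, and gcd(β, d/b) = 1. -/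
/-!
Since `m > 0`, the relation `m · lcm(n,p) / n = m` forces `lcm(n,p) = n`, i.e. `p ∣ n`, and then
`k = q · (n/p)`. With `g = gcd(q,a)` we have `lcm(q,a) = q · (a/g) = a · (q/g)`, so
`l = p · (a/g)` and `d = b · (q/g)`: thus `β = a/g` and `d/b = q/g`, which are coprime, and
`a · d = b · β · q`.
-/

namespace Nat

theorem lcm_eq_mul_div_gcd_right (q a : ℕ) : lcm q a = q * (a / gcd q a) :=
  Nat.mul_div_assoc q (gcd_dvd_right q a)

theorem lcm_eq_mul_div_gcd_left (q a : ℕ) : lcm q a = a * (q / gcd q a) := by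
  rw [lcm_comm, gcd_comm]
  exact lcm_eq_mul_div_gcd_right a q

theorem mul_lcm_div_left (c : ℕ) {q : ℕ} (hq : 0 < q) (a : ℕ) :
    c * lcm q a / q = c * (a / gcd q a) := by
  rw [Nat.mul_div_assoc c (dvd_lcm_left q a), lcm_eq_mul_div_gcd_right,
    Nat.mul_div_cancel_left _ hq]

theorem mul_lcm_div_right (c q : ℕ) {a : ℕ} (ha : 0 < a) :
    c * lcm q a / a = c * (q / gcd q a) := by
  rw [Nat.mul_div_assoc c (dvd_lcm_right q a), lcm_eq_mul_div_gcd_left,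
    Nat.mul_div_cancel_left _ ha]

theorem dvd_of_mul_lcm_div_eq_self {m n p : ℕ} (hm : 0 < m) (h : m * lcm n p / n = m) :
    p ∣ n := by
  rw [Nat.mul_div_assoc m (dvd_lcm_left n p)] at h
  have hdiv : lcm n p / n = 1 := Nat.eq_of_mul_eq_mul_left hm (h.trans (mul_one m).symm)
  exact lcm_eq_left_iff_dvd.mp (eq_of_dvd_of_div_eq_one (dvd_lcm_left n p) hdiv).symm

end Nat

theorem stmt3_general (m n h k a b l d p q : ℕ)
    (hm : 0 < m) (hn : 0 < n) (ha : 0 < a)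
    (hb : 0 < b) (hl : 0 < l) (hp : 0 < p) (hq : 0 < q)
    (h1 : m * Nat.lcm n p / n = h) (h2 : q * Nat.lcm n p / p = k)
    (h3 : p * Nat.lcm q a / q = l) (h4 : b * Nat.lcm q a / a = d)
    (hmh : m = h) (hlp : l ≠ p) :
    b ∣ d ∧ l / p ≠ 1 ∧ p = l / (l / p) ∧ p = n / (n / p) ∧
      q = a * d / (b * (l / p)) ∧ q = k / (n / p) ∧
      Nat.gcd (l / p) (d / b) = 1 := by
  subst hmh h3 h4 h2
  have hpn : p ∣ n := Nat.dvd_of_mul_lcm_div_eq_self hm h1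
  rw [Nat.lcm_eq_left hpn, Nat.mul_div_assoc q hpn, Nat.mul_lcm_div_left p hq,
    Nat.mul_lcm_div_right b q ha] at *
  set β := a / Nat.gcd q a
  set δ := q / Nat.gcd q a
  have hβ : p * β / p = β := Nat.mul_div_cancel_left β hp
  have hβpos : 0 < β := Nat.pos_of_mul_pos_left hl
  have hnp : 0 < n / p := Nat.div_pos (Nat.le_of_dvd hn hpn) hp
  have had : a * (b * δ) = b * β * q := by
    rw [mul_left_comm, ← Nat.lcm_eq_mul_div_gcd_left, Nat.lcm_eq_mul_div_gcd_right, mul_comm q,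
      mul_assoc]
  have hcop : Nat.gcd β δ = 1 := by
    simpa only [β, δ, Nat.gcd_comm a q] using Nat.coprime_div_gcd_div_gcd (m := a) (n := q)
      (Nat.gcd_pos_of_pos_right a hq)
  rw [hβ, Nat.mul_div_cancel_left δ hb]
  refine ⟨Dvd.intro δ rfl, fun hβ1 => hlp (by rw [hβ1, mul_one]),
    (Nat.mul_div_cancel p hβpos).symm, (Nat.div_div_self hpn hn.ne').symm,
    ?_, (Nat.mul_div_cancel q hnp).symm, hcop⟩
  rw [had, Nat.mul_div_cancel_left q (Nat.mul_pos hb hβpos)]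

/-- Dimension compatibility for the coupled STP tensor–matrix equations
`A ⋉ X = B`, `X ⋉ C = D`, case `m = h`, `l ≠ p`.  With `α = n/p` and
`β = l/p`: `d/b` is a positive integer, `β ≠ 1`, `p = l/β = n/α`,
`q = (a·d)/(b·β) = k/α`, and `gcd(β, d/b) = 1`. -/
theorem stmt3 (m n h k a b l d p q : ℕ)
    (hm : 0 < m) (hn : 0 < n) (hh : 0 < h) (hk : 0 < k) (ha : 0 < a)
    (hb : 0 < b) (hl : 0 < l) (hd : 0 < d) (hp : 0 < p) (hq : 0 < q)
    (h1 : m * Nat.lcm n p / n = h) (h2 : q * Nat.lcm n p / p = k)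
    (h3 : p * Nat.lcm q a / q = l) (h4 : b * Nat.lcm q a / a = d)
    (hmh : m = h) (hlp : l ≠ p) :
    b ∣ d ∧ l / p ≠ 1 ∧ p = l / (l / p) ∧ p = n / (n / p) ∧
      q = a * d / (b * (l / p)) ∧ q = k / (n / p) ∧
      Nat.gcd (l / p) (d / b) = 1 :=
  stmt3_general m n h k a b l d p q hm hn ha hb hl hp hq h1 h2 h3 h4 hmh hlp
end

section
/- Let positive integers m, n, h, k, a, b, l, d, p, q satisfy (m·lcm(n,p))/n = h, (q·lcm(n,p))/p = k, (p·lcm(q,a))/q = l, (b·lcm(q,a))/a = d, with m ≠ h and l = p. Set α = lcm(n,p)/p. Then h/m and d/b are positive integers, p = l = (n·h)/(α·m), q = (a·d)/b = k/α, and gcd(α, h/m) = 1. -/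
/-!
Write `L = lcm(n,p)` and `g = gcd(n,p)`. Since `n ∣ L` and `p ∣ L`, the divisions in the hypotheses are
exact: `h = m·(L/n)` and `k = q·α` with `α = L/p`. Now `L/p = n/g` and `L/n = p/g` are coprime, and
`n·h = m·L = α·m·p`. Finally `l = p` forces `lcm(q,a) = q`, i.e. `a ∣ q`, so `d = b·(q/a)` and `a·d = b·q`.
-/

namespace Nat

theorem lcm_div_right_eq_div_gcd_s4 (n : ℕ) {p : ℕ} (hp : 0 < p) : lcm n p / p = n / gcd n p := by
  rw [lcm_eq_mul_div, ← Nat.div_mul_right_comm (gcd_dvd_left n p), Nat.mul_div_cancel _ hp]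

theorem lcm_div_left_eq_div_gcd_s4 {n : ℕ} (p : ℕ) (hn : 0 < n) : lcm n p / n = p / gcd n p := by
  rw [lcm_comm, gcd_comm, lcm_div_right_eq_div_gcd_s4 p hn]

theorem coprime_lcm_div_right_lcm_div_left {n p : ℕ} (hn : 0 < n) (hp : 0 < p) :
    Coprime (lcm n p / p) (lcm n p / n) := by
  rw [lcm_div_right_eq_div_gcd_s4 n hp, lcm_div_left_eq_div_gcd_s4 p hn]
  exact coprime_div_gcd_div_gcd (gcd_pos_of_pos_left p hn)

theorem dvd_of_mul_lcm_div_eq_self_s4 {p q a : ℕ} (hp : 0 < p) (h : p * lcm q a / q = p) : a ∣ q := by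
  rw [Nat.mul_div_assoc p (dvd_lcm_left q a), Nat.mul_eq_left hp.ne'] at h
  have hlcm : lcm q a = q * 1 := Nat.eq_mul_of_div_eq_right (dvd_lcm_left q a) h
  exact lcm_eq_left_iff_dvd.mp (by rwa [Nat.mul_one] at hlcm)

end Nat

theorem stmt4_general (m n h k a b l d p q : ℕ)
    (hm : 0 < m) (hn : 0 < n) (hb : 0 < b) (hp : 0 < p)
    (h1 : m * Nat.lcm n p / n = h) (h2 : q * Nat.lcm n p / p = k)
    (h3 : p * Nat.lcm q a / q = l) (h4 : b * Nat.lcm q a / a = d)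
    (hlp : l = p) :
    m ∣ h ∧ b ∣ d ∧ p = l ∧
      p = n * h / (Nat.lcm n p / p * m) ∧
      q = a * d / b ∧ q = k / (Nat.lcm n p / p) ∧
      Nat.gcd (Nat.lcm n p / p) (h / m) = 1 := by
  set L := Nat.lcm n p
  set α := L / p
  have hα : 0 < α := Nat.div_pos (Nat.le_of_dvd (Nat.lcm_pos hn hp) (Nat.dvd_lcm_right n p)) hp
  have h_eq : h = m * (L / n) := by rw [← h1, Nat.mul_div_assoc m (Nat.dvd_lcm_left n p)]
  have k_eq : k = q * α := by rw [← h2, Nat.mul_div_assoc q (Nat.dvd_lcm_right n p)]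
  have haq : a ∣ q := Nat.dvd_of_mul_lcm_div_eq_self_s4 hp (h3.trans hlp)
  have d_eq : d = b * (q / a) := by rw [← h4, Nat.lcm_eq_left haq, Nat.mul_div_assoc b haq]
  have nh_eq : n * h = α * m * p := by
    calc n * h = m * (n * (L / n)) := by rw [h_eq, Nat.mul_left_comm]
      _ = m * (α * p) := by
        rw [Nat.mul_div_cancel' (Nat.dvd_lcm_left n p), Nat.div_mul_cancel (Nat.dvd_lcm_right n p)]
      _ = α * m * p := by ring
  refine ⟨⟨_, h_eq⟩, ⟨_, d_eq⟩, hlp.symm, ?_, ?_, ?_, ?_⟩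
  · rw [nh_eq, Nat.mul_div_cancel_left p (Nat.mul_pos hα hm)]
  · rw [d_eq, Nat.mul_left_comm, Nat.mul_div_cancel' haq, Nat.mul_div_cancel_left q hb]
  · rw [k_eq, Nat.mul_div_cancel q hα]
  · rw [h_eq, Nat.mul_div_cancel_left _ hm]
    exact Nat.coprime_lcm_div_right_lcm_div_left hn hp

/-- Dimension compatibility for the coupled STP tensor–matrix equations
`A ⋉ X = B`, `X ⋉ C = D`, case `m ≠ h`, `l = p`.  With `α = lcm(n,p)/p`:
`h/m` and `d/b` are positive integers, `p = l = (n·h)/(α·m)`,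
`q = (a·d)/b = k/α`, and `gcd(α, h/m) = 1`. -/
theorem stmt4 (m n h k a b l d p q : ℕ)
    (hm : 0 < m) (hn : 0 < n) (hh : 0 < h) (hk : 0 < k) (ha : 0 < a)
    (hb : 0 < b) (hl : 0 < l) (hd : 0 < d) (hp : 0 < p) (hq : 0 < q)
    (h1 : m * Nat.lcm n p / n = h) (h2 : q * Nat.lcm n p / p = k)
    (h3 : p * Nat.lcm q a / q = l) (h4 : b * Nat.lcm q a / a = d)
    (hmh : m ≠ h) (hlp : l = p) :
    m ∣ h ∧ b ∣ d ∧ p = l ∧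
      p = n * h / (Nat.lcm n p / p * m) ∧
      q = a * d / b ∧ q = k / (Nat.lcm n p / p) ∧
      Nat.gcd (Nat.lcm n p / p) (h / m) = 1 :=
  stmt4_general m n h k a b l d p q hm hn hb hp h1 h2 h3 h4 hlp
end

section
/- Suppose X ∈ C^{p₁×q₁} is a solution of the coupled matrix STP equations A ⋉ X = B and X ⋉ C = D, and p₂×q₂ is another permissible size with q₂/q₁ = p₂/p₁ = s a positive integer. Then X ⊗ I_s ∈ C^{p₂×q₂} is also a solution of the same coupled equations. -/
/-!
Since `(X ⊗ I_s) ⊗ I_v = X ⊗ I_{s v}`, replacing `X` by `X ⊗ I_s` in `A ⋉ X` turns the factor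
`X ⊗ I_{t/p₁}` into `(X ⊗ I_s) ⊗ I_{t'/p₂} = X ⊗ I_{s t'/p₂}`, where `t = lcm(n, p₁)` and
`t' = lcm(n, p₂)`. Permissibility of the size `p₂ × q₂` forces `t = t'` (unless `A ⋉ X` has no
rows), and then `s t'/p₂ = t/p₁`, so nothing changes. The same argument, with `lcm(q₁, a)`,
applies to `X ⋉ C`.
-/

open Matrix

/-- The semi-tensor product of matrices:
`A ⋉ X = (A ⊗ I_{t/n})(X ⊗ I_{t/p})` with `t = lcm(n,p)`, with indices
flattened to `Fin`s. -/
noncomputable def mstp {m n p q : ℕ} (A : Matrix (Fin m) (Fin n) ℂ)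
    (X : Matrix (Fin p) (Fin q) ℂ) :
    Matrix (Fin (m * (Nat.lcm n p / n))) (Fin (q * (Nat.lcm n p / p))) ℂ :=
  (Matrix.reindex finProdFinEquiv
      (finProdFinEquiv.trans (finCongr (Nat.mul_div_cancel' (Nat.dvd_lcm_left n p))))
      (Matrix.kroneckerMap (· * ·) A
        (1 : Matrix (Fin (Nat.lcm n p / n)) (Fin (Nat.lcm n p / n)) ℂ))) *
  (Matrix.reindex
      (finProdFinEquiv.trans (finCongr (Nat.mul_div_cancel' (Nat.dvd_lcm_right n p))))
      finProdFinEquiv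
      (Matrix.kroneckerMap (· * ·) X
        (1 : Matrix (Fin (Nat.lcm n p / p)) (Fin (Nat.lcm n p / p)) ℂ)))

theorem Matrix.heq_of_apply_eq {α : Type*} {m m' n n' : ℕ} (hm : m = m') (hn : n = n')
    {M : Matrix (Fin m) (Fin n) α} {N : Matrix (Fin m') (Fin n') α}
    (h : ∀ i j, M i j = N (Fin.cast hm i) (Fin.cast hn j)) : HEq M N := by
  subst hm hn
  exact heq_of_eq (Matrix.ext h)

theorem Nat.eq_of_mul_div_eq_mul_div {c d t t' : ℕ} (hd : d ∣ t) (hd' : d ∣ t')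
    (h : c * (t / d) = c * (t' / d)) (h0 : c * (t' / d) ≠ 0) : t = t' :=
  (Nat.div_left_inj hd hd').1 <|
    Nat.eq_of_mul_eq_mul_left (Nat.pos_of_ne_zero (left_ne_zero_of_mul h0)) h

theorem Nat.mul_div_mul_eq_div {p s t : ℕ} (h : p * s ∣ t) : s * (t / (p * s)) = t / p := by
  rw [← Nat.div_div_eq_div_mul]
  exact Nat.mul_div_cancel' (Nat.dvd_div_of_mul_dvd h)

section

variable {m n p q a b : ℕ}

noncomputable def kronOne (X : Matrix (Fin p) (Fin q) ℂ) (v : ℕ) :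
    Matrix (Fin (p * v)) (Fin (q * v)) ℂ :=
  reindex finProdFinEquiv finProdFinEquiv
    (kroneckerMap (· * ·) X (1 : Matrix (Fin v) (Fin v) ℂ))

theorem finProdFinEquiv_assoc (i : Fin p) (j : Fin q) (k : Fin a) :
    Fin.cast (Nat.mul_assoc p q a) (finProdFinEquiv (finProdFinEquiv (i, j), k)) =
      finProdFinEquiv (i, finProdFinEquiv (j, k)) :=
  Fin.ext (by simp only [Fin.val_cast, finProdFinEquiv_apply_val]; ring)

theorem kronOne_kronOne (X : Matrix (Fin p) (Fin q) ℂ) (s v : ℕ) :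
    kronOne (kronOne X s) v =
      (kronOne X (s * v)).submatrix (Fin.cast (Nat.mul_assoc p s v))
        (Fin.cast (Nat.mul_assoc q s v)) := by
  ext I J
  obtain ⟨⟨I', k⟩, rfl⟩ := finProdFinEquiv.surjective I
  obtain ⟨⟨i, r⟩, rfl⟩ := finProdFinEquiv.surjective I'
  obtain ⟨⟨J', l⟩, rfl⟩ := finProdFinEquiv.surjective J
  obtain ⟨⟨j, t⟩, rfl⟩ := finProdFinEquiv.surjective J'
  simp only [kronOne, submatrix_apply, finProdFinEquiv_assoc, reindex_apply,
    Equiv.symm_apply_apply, kroneckerMap_apply, one_apply, EmbeddingLike.apply_eq_iff_eq,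
    Prod.mk.injEq, ite_and]
  split_ifs <;> simp

/-- `A ⋉ X` formed through any common dimension `t = n u = p v`; with `t` a free variable
the index casts can be eliminated by `subst`, which is impossible for `t = lcm n p`. -/
noncomputable def stpAt (A : Matrix (Fin m) (Fin n) ℂ) (X : Matrix (Fin p) (Fin q) ℂ)
    (u v t : ℕ) (hu : n * u = t) (hv : p * v = t) : Matrix (Fin (m * u)) (Fin (q * v)) ℂ :=
  (kronOne A u).submatrix id (Fin.cast hu.symm) * (kronOne X v).submatrix (Fin.cast hv.symm) id

theorem mstp_eq_stpAt (A : Matrix (Fin m) (Fin n) ℂ) (X : Matrix (Fin p) (Fin q) ℂ) :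
    mstp A X = stpAt A X (Nat.lcm n p / n) (Nat.lcm n p / p) (Nat.lcm n p)
      (Nat.mul_div_cancel' (Nat.dvd_lcm_left n p)) (Nat.mul_div_cancel' (Nat.dvd_lcm_right n p)) :=
  rfl

theorem stpAt_congr (A : Matrix (Fin m) (Fin n) ℂ) (X : Matrix (Fin p) (Fin q) ℂ)
    {u v t u' v' t' : ℕ} (hu : n * u = t) (hv : p * v = t) (hu' : n * u' = t') (hv' : p * v' = t')
    (hu_eq : u = u') (hv_eq : v = v') (ht : t = t') :
    HEq (stpAt A X u v t hu hv) (stpAt A X u' v' t' hu' hv') := by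
  subst hu_eq hv_eq ht
  rfl

theorem stpAt_kronOne_right (A : Matrix (Fin m) (Fin n) ℂ) (X : Matrix (Fin p) (Fin q) ℂ)
    {s u v t : ℕ} (hu : n * u = t) (hv : p * s * v = t) :
    HEq (stpAt A (kronOne X s) u v t hu hv)
      (stpAt A X u (s * v) t hu ((Nat.mul_assoc p s v).symm.trans hv)) := by
  refine Matrix.heq_of_apply_eq rfl (Nat.mul_assoc q s v) fun i j => ?_
  simp only [stpAt, kronOne_kronOne, mul_apply, submatrix_apply, id, Fin.cast_cast,
    Fin.cast_eq_self]

theorem stpAt_kronOne_left (X : Matrix (Fin p) (Fin q) ℂ) (C : Matrix (Fin a) (Fin b) ℂ)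
    {s u v t : ℕ} (hu : q * s * u = t) (hv : a * v = t) :
    HEq (stpAt (kronOne X s) C u v t hu hv)
      (stpAt X C (s * u) v t ((Nat.mul_assoc q s u).symm.trans hu) hv) := by
  refine Matrix.heq_of_apply_eq (Nat.mul_assoc p s u) rfl fun i j => ?_
  simp only [stpAt, kronOne_kronOne, mul_apply, submatrix_apply, id, Fin.cast_cast,
    Fin.cast_eq_self]

theorem mstp_kronOne_right (A : Matrix (Fin m) (Fin n) ℂ) (X : Matrix (Fin p) (Fin q) ℂ)
    {s : ℕ} (h : Nat.lcm n (p * s) = Nat.lcm n p) : HEq (mstp A (kronOne X s)) (mstp A X) := by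
  have hdvd : p * s ∣ Nat.lcm n p := h ▸ Nat.dvd_lcm_right n (p * s)
  rw [mstp_eq_stpAt, mstp_eq_stpAt]
  refine (stpAt_kronOne_right A X _ _).trans (stpAt_congr A X _ _ _ _ (by rw [h]) ?_ h)
  rw [h, Nat.mul_div_mul_eq_div hdvd]

theorem mstp_kronOne_left (X : Matrix (Fin p) (Fin q) ℂ) (C : Matrix (Fin a) (Fin b) ℂ)
    {s : ℕ} (h : Nat.lcm (q * s) a = Nat.lcm q a) : HEq (mstp (kronOne X s) C) (mstp X C) := by
  have hdvd : q * s ∣ Nat.lcm q a := h ▸ Nat.dvd_lcm_left (q * s) a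
  rw [mstp_eq_stpAt, mstp_eq_stpAt]
  refine (stpAt_kronOne_left X C _ _).trans (stpAt_congr X C _ _ _ _ ?_ (by rw [h]) h)
  rw [h, Nat.mul_div_mul_eq_div hdvd]

end

theorem stmt6_general {m n p₁ q₁ a b p₂ q₂ s : ℕ}
    (A : Matrix (Fin m) (Fin n) ℂ) (X : Matrix (Fin p₁) (Fin q₁) ℂ)
    (C : Matrix (Fin a) (Fin b) ℂ)
    (B : Matrix (Fin (m * (Nat.lcm n p₁ / n))) (Fin (q₁ * (Nat.lcm n p₁ / p₁))) ℂ)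
    (D : Matrix (Fin (p₁ * (Nat.lcm q₁ a / q₁))) (Fin (b * (Nat.lcm q₁ a / a))) ℂ)
    (hp2 : p₂ = p₁ * s) (hq2 : q₂ = q₁ * s)
    -- the size `p₂ × q₂` is permissible for the same system:
    (hB1 : m * (Nat.lcm n p₂ / n) = m * (Nat.lcm n p₁ / n))
    (hB2 : q₂ * (Nat.lcm n p₂ / p₂) = q₁ * (Nat.lcm n p₁ / p₁))
    (hD1 : p₂ * (Nat.lcm q₂ a / q₂) = p₁ * (Nat.lcm q₁ a / q₁))
    (hD2 : b * (Nat.lcm q₂ a / a) = b * (Nat.lcm q₁ a / a))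
    (hB : mstp A X = B) (hD : mstp X C = D)
    (X' : Matrix (Fin p₂) (Fin q₂) ℂ)
    (hX' : X' = Matrix.reindex (finProdFinEquiv.trans (finCongr hp2.symm))
      (finProdFinEquiv.trans (finCongr hq2.symm))
      (Matrix.kroneckerMap (· * ·) X (1 : Matrix (Fin s) (Fin s) ℂ))) :
    HEq (mstp A X') B ∧ HEq (mstp X' C) D := by
  subst hp2 hq2 hB hD
  obtain rfl : X' = kronOne X s := hX'
  constructor
  · by_cases h0 : m * (Nat.lcm n p₁ / n) = 0
    · exact Matrix.heq_of_apply_eq hB1 hB2 fun i => ((i.cast hB1).cast h0).elim0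
    · exact mstp_kronOne_right A X <| Nat.eq_of_mul_div_eq_mul_div (Nat.dvd_lcm_left _ _)
        (Nat.dvd_lcm_left _ _) hB1 h0
  · by_cases h0 : b * (Nat.lcm q₁ a / a) = 0
    · exact Matrix.heq_of_apply_eq hD1 hD2 fun _ j => ((j.cast hD2).cast h0).elim0
    · exact mstp_kronOne_left X C <| Nat.eq_of_mul_div_eq_mul_div (Nat.dvd_lcm_right _ _)
        (Nat.dvd_lcm_right _ _) hD2 h0

/-- If `X ∈ ℂ^{p₁×q₁}` solves the coupled STP equations `A ⋉ X = B`,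
`X ⋉ C = D`, and `p₂ × q₂` is another permissible size with
`p₂/p₁ = q₂/q₁ = s`, then `X ⊗ I_s ∈ ℂ^{p₂×q₂}` solves the same coupled
equations. -/
theorem stmt6 {m n p₁ q₁ a b p₂ q₂ s : ℕ}
    (A : Matrix (Fin m) (Fin n) ℂ) (X : Matrix (Fin p₁) (Fin q₁) ℂ)
    (C : Matrix (Fin a) (Fin b) ℂ)
    (B : Matrix (Fin (m * (Nat.lcm n p₁ / n))) (Fin (q₁ * (Nat.lcm n p₁ / p₁))) ℂ)
    (D : Matrix (Fin (p₁ * (Nat.lcm q₁ a / q₁))) (Fin (b * (Nat.lcm q₁ a / a))) ℂ)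
    (hs : 0 < s) (hp2 : p₂ = p₁ * s) (hq2 : q₂ = q₁ * s)
    -- the size `p₂ × q₂` is permissible for the same system:
    (hB1 : m * (Nat.lcm n p₂ / n) = m * (Nat.lcm n p₁ / n))
    (hB2 : q₂ * (Nat.lcm n p₂ / p₂) = q₁ * (Nat.lcm n p₁ / p₁))
    (hD1 : p₂ * (Nat.lcm q₂ a / q₂) = p₁ * (Nat.lcm q₁ a / q₁))
    (hD2 : b * (Nat.lcm q₂ a / a) = b * (Nat.lcm q₁ a / a))
    (hB : mstp A X = B) (hD : mstp X C = D)
    (X' : Matrix (Fin p₂) (Fin q₂) ℂ)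
    (hX' : X' = Matrix.reindex (finProdFinEquiv.trans (finCongr hp2.symm))
      (finProdFinEquiv.trans (finCongr hq2.symm))
      (Matrix.kroneckerMap (· * ·) X (1 : Matrix (Fin s) (Fin s) ℂ))) :
    HEq (mstp A X') B ∧ HEq (mstp X' C) D :=
  stmt6_general A X C B D hp2 hq2 hB1 hB2 hD1 hD2 hB hD X' hX'
end
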